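/- The pure-mixed normalization coefficient β^{rr}_{00} = binom(s,r)^{-1} ∑_{2m ≤ s−r} (1/(4^m m!)) · (r−s)_{2m}/((1/2−s)_m) equals binom(s,r)^{-1} · Γ(1/2+(r+s)/2)Γ(1+(r+s)/2)/(Γ(1/2+s)Γ(1+r)), i.e. (α_r)² := 1/β^{rr}_{00} = binom(s,r) · Γ(1/2+s)Γ(1+r)/(Γ(1/2+(r+s)/2)Γ(1+(r+s)/2)). -/

import Mathlib

/-!
Write `a s r m` for the `m`-th summand of `β^{rr}_{00}` and `S s r = ∑ₘ a s r m`. Both `S s r`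
and the Gamma quotient `Γ(1/2+(r+s)/2) Γ(1+(r+s)/2) / (Γ(1/2+s) Γ(1+r))` equal `1` at `r = s` and
satisfy `2 (r+1) f (r+1) = (r+s+1) f r`, so downward induction on `r` identifies them. For the
Gamma quotient the recurrence is `Γ(z+1) = z Γ(z)`; for the sum it comes from the
Wilf–Zeilberger certificate `R m = m (2m - 1 - 2s) a s r m`, for which
`(r - s) ((r+s+1) a s r m - 2 (r+1) a s (r+1) m) = 2 (R m - R (m+1))` telescopes, and `R` vanishes
at both ends of the range of summation.
-/

open Finset

noncomputable section

/-- Rising factorial (Pochhammer symbol) (x)_n = x(x+1)⋯(x+n−1). -/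
def poch (x : ℝ) (n : ℕ) : ℝ := ∏ k ∈ Finset.range n, (x + k)

/-- β^{rr}_{00} = binom(s,r)⁻¹ ∑_{2m ≤ s−r} (1/(4^m m!))·(r−s)_{2m}/((1/2−s)_m). -/
def beta00 (s r : ℕ) : ℝ :=
  ((Nat.choose s r : ℝ))⁻¹ *
    ∑ m ∈ Finset.range ((s - r) / 2 + 1),
      (1 / (4 ^ m * (Nat.factorial m : ℝ))) *
        poch ((r : ℝ) - s) (2 * m) / poch (1 / 2 - s) m

lemma poch_zero (x : ℝ) : poch x 0 = 1 := by
  simp [poch]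

lemma poch_succ (x : ℝ) (n : ℕ) : poch x (n + 1) = poch x n * (x + n) :=
  prod_range_succ _ n

lemma poch_succ' (x : ℝ) (n : ℕ) : poch x (n + 1) = x * poch (x + 1) n := by
  rw [poch, prod_range_succ', poch, mul_comm]
  simp only [Nat.cast_add, Nat.cast_one, Nat.cast_zero, add_zero]
  congr 1
  exact prod_congr rfl fun k _ => by ring

lemma poch_neg_natCast_eq_zero {N n : ℕ} (h : N < n) : poch (-(N : ℝ)) n = 0 :=
  prod_eq_zero (mem_range.2 h) (by ring)

lemma poch_one_half_sub_natCast_ne_zero (s n : ℕ) : poch (1 / 2 - (s : ℝ)) n ≠ 0 := by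
  refine prod_ne_zero_iff.2 fun k _ hk => ?_
  have : 2 * (k : ℝ) + 1 = 2 * s := by linarith
  have : 2 * k + 1 = 2 * s := by exact_mod_cast this
  omega

def beta00Term (s r m : ℕ) : ℝ :=
  (1 / (4 ^ m * (Nat.factorial m : ℝ))) * poch ((r : ℝ) - s) (2 * m) / poch (1 / 2 - s) m

def beta00Sum (s r : ℕ) : ℝ :=
  ∑ m ∈ range ((s - r) / 2 + 1), beta00Term s r m

lemma beta00_eq_inv_choose_mul_beta00Sum (s r : ℕ) :
    beta00 s r = (Nat.choose s r : ℝ)⁻¹ * beta00Sum s r :=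
  rfl

lemma beta00Term_eq_zero {s r m : ℕ} (hr : r ≤ s) (hm : s - r < 2 * m) :
    beta00Term s r m = 0 := by
  have : (r : ℝ) - s = -((s - r : ℕ) : ℝ) := by push_cast [Nat.cast_sub hr]; ring
  rw [beta00Term, this, poch_neg_natCast_eq_zero hm, mul_zero, zero_div]

lemma sum_range_beta00Term {s r K : ℕ} (hr : r ≤ s) (hK : (s - r) / 2 < K) :
    ∑ m ∈ range K, beta00Term s r m = beta00Sum s r := by
  refine (sum_subset (range_subset_range.2 hK) fun m _ hm => ?_).symm
  exact beta00Term_eq_zero hr (by simp only [mem_range, not_lt] at hm; omega)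

lemma beta00Sum_self (s : ℕ) : beta00Sum s s = 1 := by
  simp [beta00Sum, beta00Term, poch_zero]

lemma beta00Term_succ (s r m : ℕ) :
    4 * (m + 1) * (1 / 2 - s + m) * beta00Term s r (m + 1) =
      ((r - s) + 2 * m) * ((r - s) + 2 * m + 1) * beta00Term s r m := by
  have hP : poch ((r : ℝ) - s) (2 * (m + 1)) =
      poch ((r : ℝ) - s) (2 * m) * ((r - s + 2 * m) * (r - s + 2 * m + 1)) := by
    rw [show 2 * (m + 1) = 2 * m + 1 + 1 by ring, poch_succ, poch_succ]
    push_cast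
    ring
  have hCd := poch_one_half_sub_natCast_ne_zero s (m + 1)
  rw [poch_succ] at hCd
  rw [beta00Term, beta00Term, hP, poch_succ, Nat.factorial_succ, pow_succ]
  generalize poch (1 / 2 - (s : ℝ)) m = C at hCd ⊢
  generalize (1 / 2 - (s : ℝ) + m) = d at hCd ⊢
  obtain ⟨hC, hd⟩ := mul_ne_zero_iff.1 hCd
  push_cast
  field_simp

lemma beta00Term_succ_left (s r m : ℕ) :
    (r - s) * beta00Term s (r + 1) m = ((r - s) + 2 * m) * beta00Term s r m := by
  have hP := poch_succ' ((r : ℝ) - s) (2 * m)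
  rw [poch_succ] at hP
  rw [beta00Term, beta00Term, Nat.cast_succ, show (r : ℝ) + 1 - s = r - s + 1 by ring]
  push_cast at hP
  linear_combination (1 / (4 ^ m * (Nat.factorial m : ℝ)) / poch (1 / 2 - s) m) * hP.symm

lemma beta00Term_recurrence_telescope (s r m : ℕ) :
    (r - s) * ((r + s + 1) * beta00Term s r m - 2 * (r + 1) * beta00Term s (r + 1) m) =
      2 * (m * (2 * m - 1 - 2 * s) * beta00Term s r m -
        (m + 1) * (2 * (m + 1) - 1 - 2 * s) * beta00Term s r (m + 1)) := by
  linear_combination (-2 * ((r : ℝ) + 1)) * beta00Term_succ_left s r m +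
    beta00Term_succ s r m

lemma beta00Sum_recurrence {s r : ℕ} (hr : r < s) :
    (r + s + 1) * beta00Sum s r = 2 * (r + 1) * beta00Sum s (r + 1) := by
  set K := (s - r) / 2 + 1
  set R : ℕ → ℝ := fun m => m * (2 * m - 1 - 2 * s) * beta00Term s r m
  have hRK : R K = 0 := by
    simp only [R, beta00Term_eq_zero hr.le (by omega : s - r < 2 * K), mul_zero]
  have htele : (r - s) * ((r + s + 1) * beta00Sum s r - 2 * (r + 1) * beta00Sum s (r + 1)) = 0 := by
    rw [← sum_range_beta00Term (K := K) hr (by omega), beta00Sum, mul_sum, mul_sum,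
      ← sum_sub_distrib, mul_sum]
    calc _ = ∑ m ∈ range K, 2 * (R m - R (m + 1)) := sum_congr rfl fun m _ => by
            simp only [R]; push_cast; exact beta00Term_recurrence_telescope s r m
      _ = 0 := by rw [← mul_sum, sum_range_sub', hRK]; simp [R]
  have hrs : (r : ℝ) - s ≠ 0 := sub_ne_zero.2 (by exact_mod_cast hr.ne)
  linear_combination (mul_eq_zero.1 htele).resolve_left hrs

def gammaQuotient (s r : ℕ) : ℝ :=
  Real.Gamma (1 / 2 + ((r : ℝ) + s) / 2) * Real.Gamma (1 + ((r : ℝ) + s) / 2) /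
    (Real.Gamma (1 / 2 + (s : ℝ)) * Real.Gamma (1 + (r : ℝ)))

lemma gammaQuotient_self (s : ℕ) : gammaQuotient s s = 1 := by
  have h1 : 0 < Real.Gamma (1 / 2 + (s : ℝ)) := Real.Gamma_pos_of_pos (by positivity)
  have h2 : 0 < Real.Gamma (1 + (s : ℝ)) := Real.Gamma_pos_of_pos (by positivity)
  rw [gammaQuotient, add_self_div_two]
  field_simp

lemma gammaQuotient_recurrence (s r : ℕ) :
    2 * (r + 1) * gammaQuotient s (r + 1) = (r + s + 1) * gammaQuotient s r := by
  set u : ℝ := ((r : ℝ) + s) / 2 with hu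
  have h1 : 0 < Real.Gamma (1 / 2 + (s : ℝ)) := Real.Gamma_pos_of_pos (by positivity)
  have h2 : 0 < Real.Gamma (1 + (r : ℝ)) := Real.Gamma_pos_of_pos (by positivity)
  have hnum₁ : 1 / 2 + (((r + 1 : ℕ) : ℝ) + s) / 2 = 1 + u := by push_cast; ring
  have hnum₂ :
      Real.Gamma (1 + (((r + 1 : ℕ) : ℝ) + s) / 2) = (1 / 2 + u) * Real.Gamma (1 / 2 + u) := by
    rw [← Real.Gamma_add_one (by positivity)]; congr 1; push_cast; ring
  have hden : Real.Gamma (1 + ((r + 1 : ℕ) : ℝ)) = (1 + r) * Real.Gamma (1 + r) := by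
    rw [← Real.Gamma_add_one (by positivity)]; push_cast; ring_nf
  rw [gammaQuotient, gammaQuotient, hnum₁, hnum₂, hden, ← hu]
  field_simp
  ring

lemma beta00Sum_eq_gammaQuotient {s r : ℕ} (h : r ≤ s) : beta00Sum s r = gammaQuotient s r := by
  induction h using Nat.decreasingInduction with
  | self => rw [beta00Sum_self, gammaQuotient_self]
  | of_succ r hr ih =>
    refine mul_left_cancel₀ (by positivity : (r + s + 1 : ℝ) ≠ 0) ?_
    rw [beta00Sum_recurrence hr, ih, gammaQuotient_recurrence]

end

/-- β^{rr}_{00} = binom(s,r)⁻¹ Γ(1/2+(r+s)/2)Γ(1+(r+s)/2)/(Γ(1/2+s)Γ(1+r)),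
i.e. (α_r)² = 1/β^{rr}_{00} = binom(s,r)·Γ(1/2+s)Γ(1+r)/(Γ(1/2+(r+s)/2)Γ(1+(r+s)/2)). -/
theorem stmt9 (s r : ℕ) (h : r ≤ s) :
    beta00 s r = ((Nat.choose s r : ℝ))⁻¹ *
        (Real.Gamma (1 / 2 + ((r : ℝ) + s) / 2) * Real.Gamma (1 + ((r : ℝ) + s) / 2)) /
        (Real.Gamma (1 / 2 + (s : ℝ)) * Real.Gamma (1 + (r : ℝ))) ∧
    1 / beta00 s r = (Nat.choose s r : ℝ) *
        (Real.Gamma (1 / 2 + (s : ℝ)) * Real.Gamma (1 + (r : ℝ))) /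
        (Real.Gamma (1 / 2 + ((r : ℝ) + s) / 2) * Real.Gamma (1 + ((r : ℝ) + s) / 2)) := by
  have hbeta : beta00 s r = (Nat.choose s r : ℝ)⁻¹ * gammaQuotient s r := by
    rw [beta00_eq_inv_choose_mul_beta00Sum, beta00Sum_eq_gammaQuotient h]
  refine ⟨by rw [hbeta, gammaQuotient]; exact (mul_div_assoc _ _ _).symm, ?_⟩
  rw [hbeta, gammaQuotient, one_div, mul_inv, inv_inv, inv_div]
  exact (mul_div_assoc _ _ _).symm
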